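/- For any K > 0 and τ₁ > 0, every complex root μ of the equation μ = K(e^{-μτ₁} - 2) has negative real part. -/

import Mathlib

/-! If `Re μ ≥ 0` then `|K e^{-μτ}| ≤ K`, while `μ + cK` has real part at least `cK > K`;
so `μ + cK = K e^{-μτ}` forces `Re μ < 0`. -/

open Complex

lemma Complex.norm_exp_neg_mul_ofReal_le_one {μ : ℂ} {τ : ℝ} (hμ : 0 ≤ μ.re) (hτ : 0 ≤ τ) :
    ‖exp (-μ * τ)‖ ≤ 1 := by
  rw [norm_exp, Real.exp_le_one_iff]
  simpa using mul_nonneg hμ hτ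

lemma Complex.re_neg_of_eq_mul_exp_sub {K τ c : ℝ} (hK : 0 < K) (hτ : 0 ≤ τ) (hc : 1 < c)
    {μ : ℂ} (hμ : μ = K * (exp (-μ * τ) - c)) : μ.re < 0 := by
  by_contra! hre
  have hshift : μ + c * K = K * exp (-μ * τ) := by linear_combination hμ
  have hupper : ‖μ + c * K‖ ≤ K := by
    rw [hshift, norm_mul, norm_real, Real.norm_of_nonneg hK.le]
    simpa using mul_le_of_le_one_right hK.le (norm_exp_neg_mul_ofReal_le_one hre hτ)
  have hlower : c * K ≤ (μ + c * K).re := by simp [hre]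
  nlinarith [re_le_norm (μ + c * K)]

theorem stmt_2 (K τ₁ : ℝ) (hK : 0 < K) (hτ : 0 < τ₁) (μ : ℂ)
    (hμ : μ = (K : ℂ) * (Complex.exp (-μ * τ₁) - 2)) : μ.re < 0 :=
  Complex.re_neg_of_eq_mul_exp_sub hK hτ.le one_lt_two (by exact_mod_cast hμ)
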